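/- Let L be a latin square of order n and let C be a critical set of L. Then for every subset D ⊆ C, the number of trades T ∈ T_L containing at least one entry of D is at least |D| (Hall's condition for the family of sets S_c = { T ∈ T_L : c ∈ T }, c ∈ C). -/

import Mathlib

/-! If `c ∈ C`, minimality of the critical set `C` gives a latin square `L' ≠ L` containing
`C \ {c}`; it cannot contain `c`, so the trade `L \ L'` meets `C` exactly in `c`. Sending each
`c ∈ D` to such a trade is injective, which is Hall's condition. -/

/-- A triple (row, column, entry) with all coordinates in `{0, …, n-1}`. -/
abbrev Triple (n : ℕ) := Fin n × Fin n × Fin n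

/-- A partial latin square of order `n`: no two distinct triples agree in two coordinates. -/
def IsPLS {n : ℕ} (P : Finset (Triple n)) : Prop :=
  ∀ a ∈ P, ∀ b ∈ P,
    ((a.1 = b.1 ∧ a.2.1 = b.2.1) ∨ (a.1 = b.1 ∧ a.2.2 = b.2.2) ∨
      (a.2.1 = b.2.1 ∧ a.2.2 = b.2.2)) → a = b

/-- A latin square of order `n`: a partial latin square with every cell filled. -/
def IsLS {n : ℕ} (L : Finset (Triple n)) : Prop :=
  IsPLS L ∧ ∀ r c : Fin n, ∃ e : Fin n, (r, c, e) ∈ L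

/-- Condition (R2): for every triple of `T₁` and every pair of coordinates,
there is a unique triple of `T₂` agreeing with it in those two coordinates.
(Condition (R3) is `R2cond T₂ T₁`.) -/
def R2cond {n : ℕ} (T₁ T₂ : Finset (Triple n)) : Prop :=
  ∀ a ∈ T₁,
    (∃! b, b ∈ T₂ ∧ b.1 = a.1 ∧ b.2.1 = a.2.1) ∧
    (∃! b, b ∈ T₂ ∧ b.1 = a.1 ∧ b.2.2 = a.2.2) ∧
    (∃! b, b ∈ T₂ ∧ b.2.1 = a.2.1 ∧ b.2.2 = a.2.2)

/-- A latin bitrade `(T₁, T₂)`: a pair of partial latin squares satisfying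
(R1) disjointness, (R2) and (R3). -/
def IsBitrade {n : ℕ} (T₁ T₂ : Finset (Triple n)) : Prop :=
  IsPLS T₁ ∧ IsPLS T₂ ∧ T₁ ∩ T₂ = ∅ ∧ R2cond T₁ T₂ ∧ R2cond T₂ T₁

/-- The trade space of `L`: nonempty subsets `T ⊆ L` forming a bitrade with some disjoint mate. -/
def TradeSpace {n : ℕ} (L : Finset (Triple n)) : Set (Finset (Triple n)) :=
  { T | T.Nonempty ∧ T ⊆ L ∧ ∃ T₂, IsBitrade T T₂ }

/-- `P` has unique completion to `L`: `L` is the only latin square of order `n` containing `P`. -/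
def UniquelyCompletes {n : ℕ} (P L : Finset (Triple n)) : Prop :=
  ∀ L', IsLS L' → P ⊆ L' → L' = L

/-- A critical set of `L`: a subset with unique completion to `L`, minimal with this property. -/
def IsCriticalSet {n : ℕ} (C L : Finset (Triple n)) : Prop :=
  C ⊆ L ∧ UniquelyCompletes C L ∧ ∀ C' ⊂ C, ¬ UniquelyCompletes C' L

/-- A face of the simplicial complex `Δ(L)`: a finite nonempty collection of trades of `L`
sharing a common triple. -/
def IsFace {n : ℕ} (L : Finset (Triple n)) (F : Finset (Finset (Triple n))) : Prop :=
  F.Nonempty ∧ (∀ T ∈ F, T ∈ TradeSpace L) ∧ ∃ x : Triple n, ∀ T ∈ F, x ∈ T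

/-- A facet of `Δ(L)`: a face maximal under inclusion. -/
def IsFacet {n : ℕ} (L : Finset (Triple n)) (F : Finset (Finset (Triple n))) : Prop :=
  IsFace L F ∧ ∀ F', IsFace L F' → F ⊆ F' → F' = F

/-- A vertex cover of `Δ(L)`: a set `A` of trades of `L` such that every facet is adjacent
to some `a ∈ A` (i.e. some member of the facet meets `a`). -/
def IsVertexCover {n : ℕ} (L : Finset (Triple n)) (A : Finset (Finset (Triple n))) : Prop :=
  (∀ a ∈ A, a ∈ TradeSpace L) ∧
  ∀ F, IsFacet L F → ∃ a ∈ A, ∃ T ∈ F, (T ∩ a).Nonempty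

/-- A minimal vertex cover of `Δ(L)`. -/
def IsMinimalVertexCover {n : ℕ} (L : Finset (Triple n))
    (A : Finset (Finset (Triple n))) : Prop :=
  IsVertexCover L A ∧ ∀ A' ⊂ A, ¬ IsVertexCover L A'

variable {n : ℕ}

theorem IsPLS.mono {P Q : Finset (Triple n)} (hQ : IsPLS Q) (hPQ : P ⊆ Q) : IsPLS P :=
  fun a ha b hb => hQ a (hPQ ha) b (hPQ hb)

theorem IsLS.exists_mem_of_row_symbol {L : Finset (Triple n)} (hL : IsLS L) (r e : Fin n) :
    ∃ c, (r, c, e) ∈ L := by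
  choose f hf using hL.2 r
  have hf_inj : Function.Injective f := fun c c' hcc' =>
    congrArg (fun t : Triple n => t.2.1)
      (hL.1 _ (hf c) _ (hf c') (Or.inr (Or.inl ⟨rfl, hcc'⟩)))
  obtain ⟨c, rfl⟩ := Finite.injective_iff_surjective.mp hf_inj e
  exact ⟨c, hf c⟩

theorem IsLS.exists_mem_of_col_symbol {L : Finset (Triple n)} (hL : IsLS L) (c e : Fin n) :
    ∃ r, (r, c, e) ∈ L := by
  choose f hf using fun r => hL.2 r c
  have hf_inj : Function.Injective f := fun r r' hrr' =>
    congrArg (fun t : Triple n => t.1)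
      (hL.1 _ (hf r) _ (hf r') (Or.inr (Or.inr ⟨rfl, hrr'⟩)))
  obtain ⟨r, rfl⟩ := Finite.injective_iff_surjective.mp hf_inj e
  exact ⟨r, hf r⟩

/-- Were the `p`-witness from `L'` in `L`, it would be `a` itself, which is not in `L'`. -/
theorem existsUnique_mem_sdiff {α : Type*} [DecidableEq α] {L L' : Finset α} {p : α → Prop}
    {a : α} (ha : a ∈ L \ L') (hpa : p a) (hL : ∀ x ∈ L, ∀ y ∈ L, p x → p y → x = y)
    (hL' : ∀ x ∈ L', ∀ y ∈ L', p x → p y → x = y) (hex : ∃ b ∈ L', p b) :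
    ∃! b, b ∈ L' \ L ∧ p b := by
  obtain ⟨haL, haL'⟩ := Finset.mem_sdiff.mp ha
  obtain ⟨b, hbL', hpb⟩ := hex
  refine ⟨b, ⟨Finset.mem_sdiff.mpr ⟨hbL', fun hbL => haL' ?_⟩, hpb⟩, ?_⟩
  · exact hL b hbL a haL hpb hpa ▸ hbL'
  · exact fun x ⟨hx, hpx⟩ => hL' x (Finset.mem_sdiff.mp hx).1 b hbL' hpx hpb

theorem IsLS.r2cond_sdiff {L L' : Finset (Triple n)} (hL : IsLS L) (hL' : IsLS L') :
    R2cond (L \ L') (L' \ L) := by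
  rintro ⟨r, c, e⟩ ha
  have unique_of {P : Finset (Triple n)} (hP : IsPLS P) :
      (∀ x ∈ P, ∀ y ∈ P, (x.1 = r ∧ x.2.1 = c) → (y.1 = r ∧ y.2.1 = c) → x = y) ∧
      (∀ x ∈ P, ∀ y ∈ P, (x.1 = r ∧ x.2.2 = e) → (y.1 = r ∧ y.2.2 = e) → x = y) ∧
      (∀ x ∈ P, ∀ y ∈ P, (x.2.1 = c ∧ x.2.2 = e) → (y.2.1 = c ∧ y.2.2 = e) → x = y) := by
    refine ⟨?_, ?_, ?_⟩ <;>
      rintro x hx y hy ⟨hx₁, hx₂⟩ ⟨hy₁, hy₂⟩ <;>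
      apply hP x hx y hy <;> simp only [hx₁, hx₂, hy₁, hy₂, true_and, and_self, true_or, or_true]
  obtain ⟨hLrc, hLre, hLce⟩ := unique_of hL.1
  obtain ⟨hL'rc, hL're, hL'ce⟩ := unique_of hL'.1
  obtain ⟨e', he'⟩ := hL'.2 r c
  obtain ⟨c', hc'⟩ := hL'.exists_mem_of_row_symbol r e
  obtain ⟨r', hr'⟩ := hL'.exists_mem_of_col_symbol c e
  exact ⟨existsUnique_mem_sdiff ha ⟨rfl, rfl⟩ hLrc hL'rc ⟨_, he', rfl, rfl⟩,
    existsUnique_mem_sdiff ha ⟨rfl, rfl⟩ hLre hL're ⟨_, hc', rfl, rfl⟩,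
    existsUnique_mem_sdiff ha ⟨rfl, rfl⟩ hLce hL'ce ⟨_, hr', rfl, rfl⟩⟩

theorem IsLS.isBitrade_sdiff {L L' : Finset (Triple n)} (hL : IsLS L) (hL' : IsLS L') :
    IsBitrade (L \ L') (L' \ L) :=
  ⟨hL.1.mono Finset.sdiff_subset, hL'.1.mono Finset.sdiff_subset,
    Finset.disjoint_iff_inter_eq_empty.mp disjoint_sdiff_sdiff,
    hL.r2cond_sdiff hL', hL'.r2cond_sdiff hL⟩

theorem IsLS.sdiff_mem_tradeSpace {L L' : Finset (Triple n)} (hL : IsLS L) (hL' : IsLS L')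
    (hne : (L \ L').Nonempty) : L \ L' ∈ TradeSpace L :=
  ⟨hne, Finset.sdiff_subset, L' \ L, hL.isBitrade_sdiff hL'⟩

theorem IsCriticalSet.exists_mem_tradeSpace_inter_eq_singleton {C L : Finset (Triple n)}
    (hC : IsCriticalSet C L) (hL : IsLS L) {c : Triple n} (hc : c ∈ C) :
    ∃ T ∈ TradeSpace L, T ∩ C = {c} := by
  obtain ⟨L', hL', hCL', hL'L⟩ : ∃ L', IsLS L' ∧ C.erase c ⊆ L' ∧ L' ≠ L := by
    simpa [UniquelyCompletes] using hC.2.2 _ (Finset.erase_ssubset hc)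
  have hcL' : c ∉ L' := fun hcL' =>
    hL'L (hC.2.1 L' hL' (Finset.insert_erase hc ▸ Finset.insert_subset hcL' hCL'))
  have hcT : c ∈ L \ L' := Finset.mem_sdiff.mpr ⟨hC.1 hc, hcL'⟩
  refine ⟨L \ L', hL.sdiff_mem_tradeSpace hL' ⟨c, hcT⟩, ?_⟩
  ext x
  simp only [Finset.mem_inter, Finset.mem_singleton]
  constructor
  · rintro ⟨hxT, hxC⟩
    by_contra hxc
    exact (Finset.mem_sdiff.mp hxT).2 (hCL' (Finset.mem_erase.mpr ⟨hxc, hxC⟩))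
  · rintro rfl
    exact ⟨hcT, hc⟩

/-- Hall's condition: for every subset `D` of a critical set `C` of `L`, the number of
trades of `L` containing at least one entry of `D` is at least `|D|`. -/
theorem critical_set_hall_condition {n : ℕ} (L C : Finset (Triple n))
    (hL : IsLS L) (hC : IsCriticalSet C L) (D : Finset (Triple n)) (hD : D ⊆ C) :
    D.card ≤ Set.ncard { T | T ∈ TradeSpace L ∧ ∃ c ∈ D, c ∈ T } := by
  choose! f hf_trade hf_inter using
    fun c (hc : c ∈ D) => hC.exists_mem_tradeSpace_inter_eq_singleton hL (hD hc)
  have mem_f {c} (hc : c ∈ D) {x} (hx : x ∈ C) : x ∈ f c ↔ x = c := by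
    simpa [hx] using Finset.ext_iff.mp (hf_inter c hc) x
  rw [← Set.ncard_coe_finset]
  refine Set.ncard_le_ncard_of_injOn f (fun c hc => ⟨hf_trade c hc, c, hc, ?_⟩) ?_
  · exact (mem_f hc (hD hc)).mpr rfl
  · intro c hc c' hc' hcc'
    exact ((mem_f hc' (hD hc)).mp (hcc' ▸ (mem_f hc (hD hc)).mpr rfl))
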